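/- arXiv:0910.2494 — 2 statements merged into one kernel-verified Lean document; each statement's English description precedes it below -/
import Mathlib

section
/- Let f ∈ L²(ℝ) with 0 ≤ f ≤ 1 a.e. and compact support, and let φ_ρ ∈ 𝒦 with parameter ρ > 0. Then ‖φ_ρ*f‖_* ≥ (1/2)∫_ℝ f ≥ (1/2)∫_ℝ f², and consequently 1/(2‖φ_ρ*f‖_*) ≤ (∫_ℝ f²)^{-1} < 2/‖f‖²_{L²(ℝ)} whenever f ≠ 0 a.e. -/
open MeasureTheory Set

noncomputable section

/-- The total variation `∫_ℝ |u'|` of a function `u : ℝ → ℝ`. -/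
def TV (u : ℝ → ℝ) : ENNReal := eVariationOn u Set.univ

/-- Convolution `(φ * u)(x) = ∫_ℝ φ(x − y) u(y) dy`. -/
def conv (φ u : ℝ → ℝ) : ℝ → ℝ := fun x => ∫ y : ℝ, φ (x - y) * u y

/-- Membership of `φ` in the kernel class `𝒦`, with parameter `σ` and profile `p`:
`φ(x) = p(|x|) χ_{[−σ,σ]}(x)` with `p ≥ 0` monotonically decreasing on `[0,σ]`
and `∫₀^σ p = 1/2`; in particular `φ ∈ L¹(ℝ)`. -/
def IsKernelWith (φ : ℝ → ℝ) (p : ℝ → ℝ) (σ : ℝ) : Prop :=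
  0 < σ ∧ Integrable φ ∧
    (∀ x ∈ Icc (0:ℝ) σ, 0 ≤ p x) ∧ AntitoneOn p (Icc (0:ℝ) σ) ∧
    (∫ x in (0:ℝ)..σ, p x) = 1 / 2 ∧
    ∀ x : ℝ, φ x = if |x| ≤ σ then p |x| else 0

/-- The hat kernel `φ̂_σ(x) = (1 − |x|/σ)/σ` for `|x| < σ`, `0` otherwise. -/
def hatKernel (σ : ℝ) : ℝ → ℝ := fun x => if |x| < σ then (1 - |x| / σ) / σ else 0

/-- The dual norm `‖f‖_* = sup { |∫ f v| : v ∈ L¹(ℝ), ∫_ℝ |v'| ≤ 1 }`. -/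
def starNorm (f : ℝ → ℝ) : ENNReal :=
  ⨆ (v : ℝ → ℝ) (_ : Integrable v ∧ TV v ≤ 1), ENNReal.ofReal |∫ x : ℝ, f x * v x|

/-- Structural description of a bar code: `n` bars with interface points
`t 0 < t 1 < ⋯ < t (2n−1)` inside `[0,1]`; the bars are the intervals
`[t (2k), t (2k+1)]`, `k < n`. -/
structure BarcodeRep where
  n : ℕ
  t : ℕ → ℝ
  mono : StrictMonoOn t (Set.Iio (2 * n))
  left : n ≠ 0 → 0 ≤ t 0
  right : n ≠ 0 → t (2 * n - 1) ≤ 1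

/-- The support of a bar code: the union of its (closed) bars. -/
def BarcodeRep.supp (B : BarcodeRep) : Set ℝ :=
  ⋃ k ∈ Finset.range B.n, Icc (B.t (2 * k)) (B.t (2 * k + 1))

/-- The bar code as a function: the characteristic function of the union of its bars. -/
def BarcodeRep.fn (B : BarcodeRep) : ℝ → ℝ := B.supp.indicator fun _ => (1:ℝ)

/-- `x` is an interface location (an endpoint of a bar) of the bar code `B`. -/
def BarcodeRep.IsInterface (B : BarcodeRep) (x : ℝ) : Prop := ∃ k < 2 * B.n, B.t k = x

/-- All bars and all (maximal, nonempty) spaces in `[0,1]` of the bar code `B`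
have width at least `ω`. -/
def BarcodeRep.MinWidth (B : BarcodeRep) (ω : ℝ) : Prop :=
  (∀ k < B.n, ω ≤ B.t (2 * k + 1) - B.t (2 * k)) ∧
  (∀ k, k + 1 < B.n → ω ≤ B.t (2 * k + 2) - B.t (2 * k + 1)) ∧
  (B.n ≠ 0 → 0 < B.t 0 → ω ≤ B.t 0) ∧
  (B.n ≠ 0 → B.t (2 * B.n - 1) < 1 → ω ≤ 1 - B.t (2 * B.n - 1))

/-- Membership in `ℬ`: `u` is (the standard representative of) a bar code. -/
def IsBarcode (u : ℝ → ℝ) : Prop := ∃ B : BarcodeRep, u = B.fn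

/-- Membership in `ℬ_ω`. -/
def IsBarcodeW (u : ℝ → ℝ) (ω : ℝ) : Prop := ∃ B : BarcodeRep, u = B.fn ∧ B.MinWidth ω

/-- Membership in `ℬ^{ij}`: `u = i` on `[0,x₁]` and `u = j` on `[x₂,1]` for some
`0 < x₁ ≤ x₂ < 1`. -/
def InBij (u : ℝ → ℝ) (i j : ℝ) : Prop :=
  ∃ x₁ x₂ : ℝ, 0 < x₁ ∧ x₁ ≤ x₂ ∧ x₂ < 1 ∧
    (∀ x ∈ Icc (0:ℝ) x₁, u x = i) ∧ (∀ x ∈ Icc x₂ (1:ℝ), u x = j)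

/-- The `L²` fidelity term `‖g − f‖²_{L²(ℝ)}`, valued in `[0,∞]`
(equal to `∞` if `g − f ∉ L²(ℝ)`). -/
def fidelity (g f : ℝ → ℝ) : ENNReal := ∫⁻ x : ℝ, ENNReal.ofReal ((g x - f x) ^ 2)

/-- The functional `F₁(u) = ∫_ℝ |u'| + λ ‖u − f‖²_{L²(ℝ)}`. -/
def F1 (lam : ℝ) (f u : ℝ → ℝ) : ENNReal := TV u + ENNReal.ofReal lam * fidelity u f

/-- The (blind) deconvolution functional `F(u) = ∫_ℝ |u'| + λ ‖φ*u − f‖²_{L²(ℝ)}`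
(this is `F₂` when `φ = φ_σ` and `F₃` when `φ = φ_ρ`). -/
def Fker (lam : ℝ) (φ f u : ℝ → ℝ) : ENNReal :=
  TV u + ENNReal.ofReal lam * fidelity (conv φ u) f

lemma evar_le_of_monotoneOn {f : ℝ → ℝ} {s : Set ℝ} (hf : MonotoneOn f s) {c d : ℝ}
    (hc : ∀ x ∈ s, c ≤ f x) (hd : ∀ x ∈ s, f x ≤ d) :
    eVariationOn f s ≤ ENNReal.ofReal (d - c) := by
  apply iSup_le
  rintro ⟨n, ⟨u, hu, us⟩⟩
  calc (∑ i ∈ Finset.range n, edist (f (u (i+1))) (f (u i)))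
      = ∑ i ∈ Finset.range n, ENNReal.ofReal (f (u (i+1)) - f (u i)) := by
        refine Finset.sum_congr rfl fun i _ => ?_
        rw [edist_dist, Real.dist_eq, abs_of_nonneg]
        exact sub_nonneg_of_le (hf (us i) (us (i+1)) (hu (Nat.le_succ _)))
    _ = ENNReal.ofReal (∑ i ∈ Finset.range n, (f (u (i+1)) - f (u i))) := by
        rw [ENNReal.ofReal_sum_of_nonneg]
        exact fun i _ => sub_nonneg_of_le (hf (us i) (us (i+1)) (hu (Nat.le_succ _)))
    _ = ENNReal.ofReal (f (u n) - f (u 0)) := by rw [Finset.sum_range_sub fun i => f (u i)]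
    _ ≤ ENNReal.ofReal (d - c) :=
        ENNReal.ofReal_le_ofReal (sub_le_sub (hd _ (us n)) (hc _ (us 0)))

lemma evar_le_of_antitoneOn {f : ℝ → ℝ} {s : Set ℝ} (hf : AntitoneOn f s) {c d : ℝ}
    (hc : ∀ x ∈ s, c ≤ f x) (hd : ∀ x ∈ s, f x ≤ d) :
    eVariationOn f s ≤ ENNReal.ofReal (d - c) := by
  apply iSup_le
  rintro ⟨n, ⟨u, hu, us⟩⟩
  calc (∑ i ∈ Finset.range n, edist (f (u (i+1))) (f (u i)))
      = ∑ i ∈ Finset.range n, ENNReal.ofReal (f (u i) - f (u (i+1))) := by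
        refine Finset.sum_congr rfl fun i _ => ?_
        rw [edist_dist, Real.dist_eq, abs_of_nonpos, neg_sub]
        exact sub_nonpos_of_le (hf (us i) (us (i+1)) (hu (Nat.le_succ _)))
    _ = ENNReal.ofReal (∑ i ∈ Finset.range n, (f (u i) - f (u (i+1)))) := by
        rw [ENNReal.ofReal_sum_of_nonneg]
        exact fun i _ => sub_nonneg_of_le (hf (us i) (us (i+1)) (hu (Nat.le_succ _)))
    _ = ENNReal.ofReal (f (u 0) - f (u n)) := by
        rw [← Finset.sum_range_sub' fun i => f (u i)]
    _ ≤ ENNReal.ofReal (d - c) :=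
        ENNReal.ofReal_le_ofReal (sub_le_sub (hd _ (us 0)) (hc _ (us n)))


lemma TV_half_indicator {a b : ℝ} (hab : a ≤ b) :
    TV ((Icc a b).indicator fun _ => (1/2:ℝ)) ≤ 1 := by
  set v := (Icc a b).indicator fun _ => (1/2:ℝ) with hv
  have hvmem : ∀ x, 0 ≤ v x ∧ v x ≤ 1/2 := by
    intro x
    by_cases h : x ∈ Icc a b <;> simp [hv, indicator_of_mem, indicator_of_notMem, h]
  have hmono : MonotoneOn v (Iic a) := by
    intro x hx y hy hxy
    by_cases h : x ∈ Icc a b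
    · have hxa : x = a := le_antisymm hx h.1
      have hya : y = a := le_antisymm hy (hxa ▸ hxy)
      rw [hxa, hya]
    · simp only [hv, indicator_of_notMem h]
      exact (hvmem y).1
  have hanti : AntitoneOn v (Ici a) := by
    intro x hx y hy hxy
    by_cases h : y ∈ Icc a b
    · have hx' : x ∈ Icc a b := ⟨hx, hxy.trans h.2⟩
      simp [hv, indicator_of_mem h, indicator_of_mem hx']
    · simp only [hv, indicator_of_notMem h]
      exact (hvmem x).1
  have hsplit : TV v = eVariationOn v (Iic a) + eVariationOn v (Ici a) := by
    rw [TV, ← Iic_union_Ici (a := a)]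
    exact eVariationOn.union v ⟨self_mem_Iic, fun y hy => hy⟩ ⟨self_mem_Ici, fun y hy => hy⟩
  rw [hsplit]
  have h1 := evar_le_of_monotoneOn hmono (c := 0) (d := 1/2)
    (fun x _ => (hvmem x).1) (fun x _ => (hvmem x).2)
  have h2 := evar_le_of_antitoneOn hanti (c := 0) (d := 1/2)
    (fun x _ => (hvmem x).1) (fun x _ => (hvmem x).2)
  calc eVariationOn v (Iic a) + eVariationOn v (Ici a)
      ≤ ENNReal.ofReal (1/2 - 0) + ENNReal.ofReal (1/2 - 0) := add_le_add h1 h2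
    _ = 1 := by rw [← ENNReal.ofReal_add (by norm_num) (by norm_num)]; norm_num


lemma kernel_integral {φ p : ℝ → ℝ} {σ : ℝ} (h : IsKernelWith φ p σ) :
    ∫ x : ℝ, φ x = 1 := by
  obtain ⟨hσ, hint, _, _, hp, hform⟩ := h
  have h2 : (∫ x in (0:ℝ)..σ, φ x) = 1/2 := by
    rw [← hp]
    apply intervalIntegral.integral_congr
    intro x hx
    rw [uIcc_of_le hσ.le] at hx
    rw [hform x, if_pos (by rw [abs_of_nonneg hx.1]; exact hx.2), abs_of_nonneg hx.1]
  have heven : ∀ x : ℝ, φ (-x) = φ x := by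
    intro x; rw [hform, hform, abs_neg]
  have h3 : (∫ x in (-σ)..(0:ℝ), φ x) = 1/2 := by
    have := intervalIntegral.integral_comp_neg (a := (0:ℝ)) (b := σ) φ
    simp only [neg_zero] at this
    rw [← this]
    rw [← h2]
    exact intervalIntegral.integral_congr fun x _ => heven x
  have h4 : (∫ x in (-σ)..σ, φ x) = 1 := by
    rw [← intervalIntegral.integral_add_adjacent_intervals
      hint.intervalIntegrable hint.intervalIntegrable, h2, h3]
    norm_num
  have h5 : φ = (Icc (-σ) σ).indicator φ := by
    funext x
    by_cases hx : x ∈ Icc (-σ) σ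
    · rw [indicator_of_mem hx]
    · rw [indicator_of_notMem hx, hform, if_neg]
      rw [abs_le]
      intro hc
      exact hx ⟨hc.1, hc.2⟩
  calc ∫ x : ℝ, φ x = ∫ x : ℝ, (Icc (-σ) σ).indicator φ x := by rw [← h5]
    _ = ∫ x in Icc (-σ) σ, φ x := integral_indicator measurableSet_Icc
    _ = ∫ x in Ioc (-σ) σ, φ x := integral_Icc_eq_integral_Ioc
    _ = ∫ x in (-σ)..σ, φ x := (intervalIntegral.integral_of_le (by linarith)).symm
    _ = 1 := h4


/-- for `f ∈ L²(ℝ)` with `0 ≤ f ≤ 1` a.e. and compact support,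
and `φ_ρ ∈ 𝒦`, one has `‖φ_ρ * f‖_* ≥ (1/2)∫ f ≥ (1/2)∫ f²`; consequently, if
`f ≠ 0` a.e. then `1/(2‖φ_ρ*f‖_*) ≤ (∫ f²)⁻¹ < 2/‖f‖²_{L²(ℝ)}`. -/
theorem statement7 (f : ℝ → ℝ) (hf : MemLp f 2 volume)
    (hbd : ∀ᵐ x ∂volume, 0 ≤ f x ∧ f x ≤ 1) (hsupp : HasCompactSupport f)
    (φ p : ℝ → ℝ) (ρ : ℝ) (hφ : IsKernelWith φ p ρ) :
    ENNReal.ofReal (1/2 * ∫ x : ℝ, f x) ≤ starNorm (conv φ f) ∧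
    1/2 * ∫ x : ℝ, (f x)^2 ≤ 1/2 * ∫ x : ℝ, f x ∧
    (¬ f =ᵐ[volume] (fun _ => (0:ℝ)) →
      1 / (2 * (starNorm (conv φ f)).toReal) ≤ (∫ x : ℝ, (f x)^2)⁻¹ ∧
      (∫ x : ℝ, (f x)^2)⁻¹ < 2 / ((eLpNorm f 2 volume).toReal)^2) := by
  have hφ1 : ∫ x : ℝ, φ x = 1 := kernel_integral hφ
  obtain ⟨hρ, hφint, -, -, -, hform⟩ := hφ
  -- a bound on the support of f
  obtain ⟨r0, hr0⟩ := hsupp.isBounded.subset_closedBall 0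
  set r : ℝ := max r0 0 with hrdef
  have hrIcc : tsupport f ⊆ Icc (-r) r := by
    refine hr0.trans ?_
    intro x hx
    rw [Metric.mem_closedBall, Real.dist_eq, sub_zero] at hx
    have : |x| ≤ r := hx.trans (le_max_left _ _)
    exact ⟨neg_le_of_abs_le this, le_of_abs_le this⟩
  have hr0' : 0 ≤ r := le_max_right _ _
  -- integrability of f
  have hfi : Integrable f volume := by
    have hgint : Integrable ((Icc (-r) r).indicator fun _ => (1:ℝ)) volume :=
      (integrable_indicator_iff measurableSet_Icc).2
        (integrableOn_const measure_Icc_lt_top.ne)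
    refine hgint.mono' hf.1 ?_
    filter_upwards [hbd] with x hx
    rw [Real.norm_eq_abs]
    by_cases h : x ∈ Icc (-r) r
    · rw [indicator_of_mem h, abs_of_nonneg hx.1]; exact hx.2
    · have : f x = 0 := image_eq_zero_of_notMem_tsupport fun hc => h (hrIcc hc)
      simp [this, indicator_of_notMem h]
  have hfnn : 0 ≤ ∫ x : ℝ, f x := integral_nonneg_of_ae (hbd.mono fun x h => h.1)
  have hf2i : Integrable (fun x => f x ^ 2) volume := hf.integrable_sq
  -- part 2
  have part2 : (∫ x : ℝ, (f x)^2) ≤ ∫ x : ℝ, f x := by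
    refine integral_mono_ae hf2i hfi ?_
    filter_upwards [hbd] with x hx
    nlinarith [hx.1, hx.2]
  -- total integral of the convolution
  have hconv : conv φ f = convolution φ f (ContinuousLinearMap.mul ℝ ℝ) volume := by
    funext x
    simp only [conv, convolution, ContinuousLinearMap.mul_apply']
    rw [← integral_sub_left_eq_self (fun t => φ t * f (x - t)) volume x]
    simp
  have hintconv : ∫ x : ℝ, conv φ f x = ∫ x : ℝ, f x := by
    rw [hconv, integral_convolution _ hφint hfi]
    simp [hφ1]
  -- the test function
  set a : ℝ := r + ρ + 1 with hadef
  have hvanish : ∀ x : ℝ, x ∉ Icc (-a) a → conv φ f x = 0 := by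
    intro x hx
    have hzero : ∀ y : ℝ, φ (x - y) * f y = 0 := by
      intro y
      by_cases hy : f y = 0
      · rw [hy, mul_zero]
      · have hy' : y ∈ Icc (-r) r := hrIcc (subset_tsupport f hy)
        have h1 : |y| ≤ r := abs_le.2 ⟨hy'.1, hy'.2⟩
        have h2 : a < |x| := by
          rw [mem_Icc, not_and_or, not_le, not_le] at hx
          rcases hx with h | h
          · exact lt_abs.2 (Or.inr (by linarith))
          · exact lt_abs.2 (Or.inl h)
        have h3 : ¬ |x - y| ≤ ρ := by
          have := abs_sub_abs_le_abs_sub x y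
          push_neg
          calc ρ < a - r := by simp [hadef]; linarith
            _ ≤ |x| - |y| := by linarith
            _ ≤ |x - y| := this
        rw [hform (x - y), if_neg h3, zero_mul]
    simp only [conv]
    rw [show (fun y => φ (x - y) * f y) = fun _ => (0:ℝ) from funext hzero, integral_zero]
  set v : ℝ → ℝ := (Icc (-a) a).indicator fun _ => (1/2:ℝ) with hvdef
  have hvint : Integrable v volume :=
    (integrable_indicator_iff measurableSet_Icc).2
      (integrableOn_const measure_Icc_lt_top.ne)
  have hTV : TV v ≤ 1 := TV_half_indicator (by linarith)
  have hpt : ∀ x : ℝ, conv φ f x * v x = 1/2 * conv φ f x := by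
    intro x
    by_cases h : x ∈ Icc (-a) a
    · rw [hvdef]; rw [indicator_of_mem h]; ring
    · rw [hvdef]; rw [indicator_of_notMem h, hvanish x h]; ring
  have hval : (∫ x : ℝ, conv φ f x * v x) = 1/2 * ∫ x : ℝ, f x := by
    calc (∫ x : ℝ, conv φ f x * v x) = ∫ x : ℝ, 1/2 * conv φ f x := by
          exact integral_congr_ae (Filter.Eventually.of_forall hpt)
      _ = 1/2 * ∫ x : ℝ, conv φ f x := integral_const_mul _ _
      _ = 1/2 * ∫ x : ℝ, f x := by rw [hintconv]
  -- part 1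
  have key : ENNReal.ofReal |∫ x : ℝ, conv φ f x * v x| ≤ starNorm (conv φ f) := by
    rw [starNorm]
    refine le_trans ?_ (le_iSup _ v)
    exact le_iSup (fun _ : Integrable v ∧ TV v ≤ 1 =>
      ENNReal.ofReal |∫ x : ℝ, conv φ f x * v x|) ⟨hvint, hTV⟩
  have part1 : ENNReal.ofReal (1/2 * ∫ x : ℝ, f x) ≤ starNorm (conv φ f) := by
    rwa [hval, abs_of_nonneg (by linarith)] at key
  refine ⟨part1, by linarith, ?_⟩
  -- part 3
  intro hne
  have hI2nn : 0 ≤ ∫ x : ℝ, (f x)^2 := integral_nonneg fun x => sq_nonneg _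
  have hI2pos : 0 < ∫ x : ℝ, (f x)^2 := by
    rcases hI2nn.lt_or_eq with h | h
    · exact h
    · exfalso
      apply hne
      have hsqz : (fun x => f x ^ 2) =ᵐ[volume] (fun _ => (0:ℝ)) :=
        (integral_eq_zero_iff_of_nonneg_ae (Filter.Eventually.of_forall fun x => sq_nonneg _) hf2i).1
          h.symm
      filter_upwards [hsqz] with x hx
      exact pow_eq_zero_iff (n := 2) (by norm_num) |>.1 hx
  have hsq : ((eLpNorm f 2 volume).toReal)^2 = ∫ x : ℝ, (f x)^2 := by
    have h := hf.eLpNorm_eq_integral_rpow_norm two_ne_zero ENNReal.ofNat_ne_top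
    simp only [ENNReal.toReal_ofNat] at h
    have heq : (fun x : ℝ => ‖f x‖ ^ (2:ℝ)) = fun x => f x ^ 2 := by
      funext x
      rw [Real.norm_eq_abs, show (2:ℝ) = ((2:ℕ):ℝ) by norm_num, Real.rpow_natCast, sq_abs]
    rw [heq] at h
    rw [h, ENNReal.toReal_ofReal (Real.rpow_nonneg hI2nn _)]
    rw [← Real.rpow_natCast ((∫ x : ℝ, f x ^ 2) ^ ((2:ℝ))⁻¹) 2, ← Real.rpow_mul hI2nn]
    norm_num
  constructor
  · by_cases hN : starNorm (conv φ f) = ⊤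
    · rw [hN]
      simp
      positivity
    · have h1 : 1/2 * ∫ x : ℝ, f x ≤ (starNorm (conv φ f)).toReal := by
        have := ENNReal.toReal_mono hN part1
        rwa [ENNReal.toReal_ofReal (by linarith)] at this
      have h2 : (∫ x : ℝ, (f x)^2) ≤ 2 * (starNorm (conv φ f)).toReal := by linarith
      rw [inv_eq_one_div]
      exact one_div_le_one_div_of_le hI2pos h2
  · rw [hsq, div_eq_mul_inv, inv_eq_one_div, div_eq_mul_inv]
    nlinarith [inv_pos.2 hI2pos]


end
end

section
/- Let ω > 0, let z ∈ ℬ_ω with z not identically 0, let ρ, σ ∈ (0, ω/2], let φ_ρ, φ_σ ∈ 𝒦 with parameters ρ, σ respectively and with φ_σ continuous, and set f_σ = φ_σ * z. Then the level set { x ∈ ℝ : (φ_ρ * f_σ)(x) = 1/2 } is exactly the set of interface locations of z, and the upper level set { x ∈ ℝ : (φ_ρ * f_σ)(x) ≥ 1/2 } equals supp z. -/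
open MeasureTheory Set

noncomputable section

/-- The "CDF" of a kernel. -/
def Phi (φ : ℝ → ℝ) (r : ℝ) : ℝ := 1/2 + ∫ u in (0:ℝ)..r, φ u

namespace IsKernelWith

variable {φ p : ℝ → ℝ} {σ : ℝ} (hK : IsKernelWith φ p σ)
include hK

lemma nonneg : ∀ x, 0 ≤ φ x := by
  intro x
  rw [hK.2.2.2.2.2 x]
  split_ifs with h
  · exact hK.2.2.1 _ ⟨abs_nonneg x, h⟩
  · exact le_rfl

lemma even : ∀ x, φ (-x) = φ x := by
  intro x
  rw [hK.2.2.2.2.2 x, hK.2.2.2.2.2 (-x), abs_neg]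

lemma zero_of : ∀ x, σ < |x| → φ x = 0 := by
  intro x hx
  rw [hK.2.2.2.2.2 x, if_neg (not_le.2 hx)]

lemma intInt (a b : ℝ) : IntervalIntegrable φ volume a b :=
  hK.2.1.intervalIntegrable

lemma phi_mono : Monotone (Phi φ) := by
  intro r r' h
  have := intervalIntegral.integral_nonneg (μ := volume) h (fun u _ => hK.nonneg u)
  have h2 : (∫ u in (0:ℝ)..r', φ u) - (∫ u in (0:ℝ)..r, φ u) = ∫ u in r..r', φ u :=
    intervalIntegral.integral_interval_sub_left (hK.intInt 0 r') (hK.intInt 0 r)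
  simp only [Phi]
  linarith

lemma phi_neg (r : ℝ) : Phi φ (-r) = 1 - Phi φ r := by
  have h2 := intervalIntegral.integral_comp_neg (a := (0:ℝ)) (b := -r) φ
  simp only [neg_neg, neg_zero] at h2
  have h1 : (∫ u in (0:ℝ)..(-r), φ (-u)) = ∫ u in (0:ℝ)..(-r), φ u :=
    intervalIntegral.integral_congr (fun x _ => hK.even x)
  have h3 : (∫ u in r..(0:ℝ), φ u) = - ∫ u in (0:ℝ)..r, φ u :=
    intervalIntegral.integral_symm 0 r
  simp only [Phi]
  rw [← h1, h2, h3]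
  ring

lemma phi_one {r : ℝ} (hr : σ ≤ r) : Phi φ r = 1 := by
  have hσ0 : (0:ℝ) < σ := hK.1
  have hps : (∫ u in (0:ℝ)..σ, φ u) = ∫ u in (0:ℝ)..σ, p u := by
    rw [intervalIntegral.integral_of_le hσ0.le, intervalIntegral.integral_of_le hσ0.le]
    apply setIntegral_congr_fun measurableSet_Ioc
    intro x hx
    rw [hK.2.2.2.2.2 x, if_pos (by rw [abs_of_pos hx.1]; exact hx.2),
      abs_of_pos hx.1]
  have hz : (∫ u in σ..r, φ u) = 0 := by
    rw [intervalIntegral.integral_of_le hr]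
    apply setIntegral_eq_zero_of_forall_eq_zero
    intro x hx
    exact hK.zero_of x (by rw [abs_of_pos (hσ0.trans hx.1)]; exact hx.1)
  have hadd := intervalIntegral.integral_add_adjacent_intervals (hK.intInt 0 σ) (hK.intInt σ r)
  simp only [Phi]
  rw [← hadd, hps, hK.2.2.2.2.1, hz]
  ring

lemma phi_zero {r : ℝ} (hr : r ≤ -σ) : Phi φ r = 0 := by
  have := hK.phi_neg (-r)
  rw [neg_neg] at this
  rw [this, hK.phi_one (by linarith)]
  ring

lemma phi_le_one (r : ℝ) : Phi φ r ≤ 1 := by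
  rcases le_total r σ with h | h
  · exact (hK.phi_mono h).trans_eq (hK.phi_one le_rfl)
  · exact (hK.phi_one h).le

lemma phi_nonneg' (r : ℝ) : 0 ≤ Phi φ r := by
  rcases le_total (-σ) r with h | h
  · exact (hK.phi_zero le_rfl).symm.trans_le (hK.phi_mono h)
  · exact (hK.phi_zero h).ge

lemma pair (r r' : ℝ) (h : 0 ≤ r + r') : 1 ≤ Phi φ r + Phi φ r' := by
  have := hK.phi_mono (show -r' ≤ r by linarith)
  rw [hK.phi_neg r'] at this
  linarith

/-- key positivity -/
lemma half_lt {r : ℝ} (hr : 0 < r) : 1/2 < Phi φ r := by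
  have hσ0 : (0:ℝ) < σ := hK.1
  set m := min r σ with hm
  have hm0 : 0 < m := lt_min hr hσ0
  have hmσ : m ≤ σ := min_le_right _ _
  -- p is integrable on subintervals of [0, σ]
  have hpint : ∀ a b : ℝ, 0 ≤ a → b ≤ σ → a ≤ b → IntervalIntegrable p volume a b := by
    intro a b ha hb hab
    rw [intervalIntegrable_iff_integrableOn_Ioc_of_le hab]
    apply (hK.2.1.integrableOn.mono_set (subset_univ _)).congr_fun ?_ measurableSet_Ioc
    intro x hx
    have hx0 : 0 < x := lt_of_le_of_lt ha hx.1
    rw [hK.2.2.2.2.2 x, abs_of_pos hx0, if_pos (hx.2.trans hb)]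
  have hphip : ∀ a b : ℝ, 0 ≤ a → b ≤ σ → a ≤ b →
      (∫ u in a..b, φ u) = ∫ u in a..b, p u := by
    intro a b ha hb hab
    rw [intervalIntegral.integral_of_le hab, intervalIntegral.integral_of_le hab]
    apply setIntegral_congr_fun measurableSet_Ioc
    intro x hx
    have hx0 : 0 < x := lt_of_le_of_lt ha hx.1
    rw [hK.2.2.2.2.2 x, abs_of_pos hx0, if_pos (hx.2.trans hb)]
  -- suffices: 0 < ∫_0^m φ
  have key : 0 < ∫ u in (0:ℝ)..m, φ u := by
    by_contra hc
    push_neg at hc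
    have h0 : (∫ u in (0:ℝ)..m, φ u) = 0 :=
      le_antisymm hc (intervalIntegral.integral_nonneg (μ := volume) hm0.le (fun u _ => hK.nonneg u))
    rw [hphip 0 m le_rfl hmσ hm0.le] at h0
    -- then p m = 0
    have hhalf : (0:ℝ) < m/2 := by linarith
    have hsub : (∫ u in (m/2)..m, p u) ≤ ∫ u in (0:ℝ)..m, p u := by
      have := intervalIntegral.integral_nonneg (μ := volume) (by linarith : (0:ℝ) ≤ m/2)
        (fun u hu => hK.2.2.1 u ⟨hu.1, hu.2.trans (by linarith)⟩)
      have hadd := intervalIntegral.integral_add_adjacent_intervals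
        (hpint 0 (m/2) le_rfl (by linarith) (by linarith))
        (hpint (m/2) m (by linarith) hmσ (by linarith))
      linarith
    have hlow : (m/2) * p m ≤ ∫ u in (m/2)..m, p u := by
      have := intervalIntegral.integral_mono_on (by linarith : m/2 ≤ m)
        (intervalIntegrable_const (c := p m))
        (hpint (m/2) m (by linarith) hmσ (by linarith))
        (fun x hx => hK.2.2.2.1 ⟨le_trans (by linarith) hx.1, hx.2.trans hmσ⟩
          ⟨(by linarith : (0:ℝ) ≤ m), hmσ⟩ hx.2)
      rw [intervalIntegral.integral_const, smul_eq_mul] at this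
      calc (m/2) * p m = (m - m/2) * p m := by ring_nf
        _ ≤ _ := this
    have hpm0 : p m ≤ 0 := by nlinarith
    have hpm : p m = 0 := le_antisymm hpm0 (hK.2.2.1 m ⟨hm0.le, hmσ⟩)
    -- then ∫_m^σ p = 0
    have hup : (∫ u in m..σ, p u) ≤ 0 := by
      have := intervalIntegral.integral_mono_on hmσ
        (hpint m σ hm0.le le_rfl hmσ)
        (intervalIntegrable_const (c := (0:ℝ)))
        (fun x hx => by
          have := hK.2.2.2.1 ⟨hm0.le, hmσ⟩ ⟨hm0.le.trans hx.1, hx.2⟩ hx.1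
          rw [hpm] at this; simpa using this)
      simpa using this
    have hadd := intervalIntegral.integral_add_adjacent_intervals
      (hpint 0 m le_rfl hmσ hm0.le) (hpint m σ hm0.le le_rfl hmσ)
    have : (∫ x in (0:ℝ)..σ, p x) ≤ 0 := by linarith
    rw [hK.2.2.2.2.1] at this
    linarith
  have hmono : (∫ u in (0:ℝ)..m, φ u) ≤ ∫ u in (0:ℝ)..r, φ u := by
    have h2 : (∫ u in (0:ℝ)..r, φ u) - (∫ u in (0:ℝ)..m, φ u) = ∫ u in m..r, φ u :=
      intervalIntegral.integral_interval_sub_left (hK.intInt 0 r) (hK.intInt 0 m)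
    have := intervalIntegral.integral_nonneg (μ := volume) (min_le_left r σ) (fun u _ => hK.nonneg u)
    linarith
  simp only [Phi]
  linarith

lemma pair_strict {r r' : ℝ} (h : 0 < r) (h' : 0 < r') : 1 < Phi φ r + Phi φ r' := by
  have := hK.half_lt h
  have := hK.half_lt h'
  linarith

/-- total mass 1 -/
lemma total : (∫ x, φ x) = 1 := by
  have h1 : (∫ x, φ x) = ∫ x in Icc (-σ) σ, φ x := by
    rw [← integral_indicator measurableSet_Icc]
    apply integral_congr_ae
    filter_upwards with x
    by_cases hx : x ∈ Icc (-σ) σ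
    · rw [indicator_of_mem hx]
    · rw [indicator_of_notMem hx, hK.zero_of x (by
        rcases not_and_or.mp hx with h | h
        · push_neg at h; rw [abs_of_neg (by linarith [hK.1] : x < 0)]; linarith
        · push_neg at h; rw [abs_of_pos (lt_of_lt_of_le hK.1 h.le)]; exact h)]
  rw [h1, integral_Icc_eq_integral_Ioc, ← intervalIntegral.integral_of_le (by linarith [hK.1] : -σ ≤ σ)]
  have hadd := intervalIntegral.integral_add_adjacent_intervals (hK.intInt (-σ) 0) (hK.intInt 0 σ)
  have hneg : (∫ u in (-σ)..(0:ℝ), φ u) = ∫ u in (0:ℝ)..σ, φ u := by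
    have h := intervalIntegral.integral_comp_neg (a := (0:ℝ)) (b := σ) φ
    simp only [neg_zero] at h
    have h' : (∫ x in (0:ℝ)..σ, φ (-x)) = ∫ x in (0:ℝ)..σ, φ x :=
      intervalIntegral.integral_congr (fun x _ => hK.even x)
    rw [← h, h']
  have hval : Phi φ σ = 1 := hK.phi_one le_rfl
  simp only [Phi] at hval
  rw [← hadd, hneg]
  linarith

end IsKernelWith

section ELemma

variable {φ p : ℝ → ℝ} {σ : ℝ} (hK : IsKernelWith φ p σ)
include hK

lemma IsKernelWith.E_ge {ω A B u : ℝ} (hA : 0 ≤ A) (hB : 0 ≤ B) (hAB : ω ≤ A + B)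
    (hσω : 2*σ ≤ ω) (hu : |u| ≤ ω/2) :
    3 ≤ Phi φ (A+u) + Phi φ (A-u) + Phi φ (B-u) + Phi φ (B+u) := by
  have hu1 : u ≤ ω/2 := le_abs_self u |>.trans hu
  have hu2 : -(ω/2) ≤ u := neg_le_of_abs_le hu
  by_cases h1 : σ ≤ A + u <;> by_cases h2 : σ ≤ A - u
  · have e1 := hK.phi_one h1
    have e2 := hK.phi_one h2
    have e3 := hK.pair (B-u) (B+u) (by linarith)
    linarith
  · have e1 := hK.phi_one h1
    have e2 := hK.phi_one (show σ ≤ B + u by linarith)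
    have e3 := hK.pair (A-u) (B-u) (by linarith)
    linarith
  · have e1 := hK.phi_one h2
    have e2 := hK.phi_one (show σ ≤ B - u by linarith)
    have e3 := hK.pair (A+u) (B+u) (by linarith)
    linarith
  · have e1 := hK.phi_one (show σ ≤ B - u by linarith)
    have e2 := hK.phi_one (show σ ≤ B + u by linarith)
    have e3 := hK.pair (A+u) (A-u) (by linarith)
    linarith

lemma IsKernelWith.E_gt {ω A B u : ℝ} (hA : |u| < A) (hB : |u| < B) (hAB : ω ≤ A + B)
    (hσω : 2*σ ≤ ω) (hu : |u| ≤ ω/2) :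
    3 < Phi φ (A+u) + Phi φ (A-u) + Phi φ (B-u) + Phi φ (B+u) := by
  have hu1 : u ≤ |u| := le_abs_self u
  have hu2 : -|u| ≤ u := neg_abs_le u
  have hu3 : u ≤ ω/2 := hu1.trans hu
  have hu4 : -(ω/2) ≤ u := (neg_le_neg hu).trans hu2
  have h0 : (0:ℝ) ≤ |u| := abs_nonneg u
  by_cases h1 : σ ≤ A + u <;> by_cases h2 : σ ≤ A - u
  · have e1 := hK.phi_one h1
    have e2 := hK.phi_one h2
    have e3 := hK.pair_strict (show (0:ℝ) < B - u by linarith) (show (0:ℝ) < B + u by linarith)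
    linarith
  · have e1 := hK.phi_one h1
    have e2 := hK.phi_one (show σ ≤ B + u by linarith)
    have e3 := hK.pair_strict (show (0:ℝ) < A - u by linarith) (show (0:ℝ) < B - u by linarith)
    linarith
  · have e1 := hK.phi_one h2
    have e2 := hK.phi_one (show σ ≤ B - u by linarith)
    have e3 := hK.pair_strict (show (0:ℝ) < A + u by linarith) (show (0:ℝ) < B + u by linarith)
    linarith
  · have e1 := hK.phi_one (show σ ≤ B - u by linarith)
    have e2 := hK.phi_one (show σ ≤ B + u by linarith)
    have e3 := hK.pair_strict (show (0:ℝ) < A + u by linarith) (show (0:ℝ) < A - u by linarith)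
    linarith

lemma IsKernelWith.pair_one {r : ℝ} : Phi φ r + Phi φ (-r) = 1 := by
  rw [hK.phi_neg]; ring

end ELemma

namespace BarcodeRep

variable {Z : BarcodeRep} {ω : ℝ} (hZ : Z.MinWidth ω) (hω : 0 < ω)

lemma lt_of_idx {i j : ℕ} (hij : i < j) (hj : j < 2 * Z.n) : Z.t i < Z.t j :=
  Z.mono (Set.mem_Iio.2 (hij.trans hj)) (Set.mem_Iio.2 hj) hij

include hZ

lemma cons {i : ℕ} (hi : i + 1 < 2 * Z.n) : Z.t i + ω ≤ Z.t (i + 1) := by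
  rcases Nat.even_or_odd i with ⟨k, hk⟩ | ⟨k, hk⟩
  · subst hk
    have := hZ.1 k (by omega)
    have e : k + k = 2 * k := by ring
    rw [e] at *
    linarith
  · subst hk
    have := hZ.2.1 k (by omega)
    have e1 : 2 * k + 1 + 1 = 2 * k + 2 := by ring
    rw [e1]
    linarith

lemma tsp : ∀ (d i : ℕ), i + d < 2 * Z.n → Z.t i + (d : ℝ) * ω ≤ Z.t (i + d) := by
  intro d
  induction d with
  | zero => intro i _; simp
  | succ d ih =>
    intro i h
    have h1 := ih i (by omega)
    have h2 := cons hZ (i := i + d) (by omega)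
    push_cast
    have e : i + (d + 1) = (i + d) + 1 := by omega
    rw [e]
    linarith

lemma sep (hω : 0 < ω) {i j : ℕ} (hij : i < j) (hj : j < 2 * Z.n) : Z.t i + ω ≤ Z.t j := by
  have h := tsp hZ (j - i) i (by omega)
  have e : i + (j - i) = j := by omega
  rw [e] at h
  have : (1:ℝ) ≤ ((j - i : ℕ) : ℝ) := by
    have : 1 ≤ j - i := by omega
    exact_mod_cast this
  nlinarith

lemma sep2 (hω : 0 < ω) {i j : ℕ} (hij : i + 2 ≤ j) (hj : j < 2 * Z.n) : Z.t i + 2 * ω ≤ Z.t j := by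
  have h := tsp hZ (j - i) i (by omega)
  have e : i + (j - i) = j := by omega
  rw [e] at h
  have : (2:ℝ) ≤ ((j - i : ℕ) : ℝ) := by
    have : 2 ≤ j - i := by omega
    exact_mod_cast this
  nlinarith

omit hZ

lemma fn_eq_sum (y : ℝ) :
    Z.fn y = ∑ k ∈ Finset.range Z.n,
      (Icc (Z.t (2 * k)) (Z.t (2 * k + 1))).indicator (fun _ => (1:ℝ)) y := by
  by_cases hy : y ∈ Z.supp
  · have hy' := hy
    simp only [BarcodeRep.supp, Set.mem_iUnion, Finset.mem_range] at hy'
    obtain ⟨k, hk, hky⟩ := hy'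
    rw [BarcodeRep.fn, indicator_of_mem hy]
    rw [Finset.sum_eq_single_of_mem k (Finset.mem_range.2 hk)]
    · simp [indicator_of_mem hky]
    · intro j hj hjk
      rw [indicator_of_notMem]
      intro hjy
      rcases lt_or_gt_of_ne hjk with h | h
      · have : Z.t (2 * j + 1) < Z.t (2 * k) :=
          lt_of_idx (by omega) (by rw [Finset.mem_range] at hj; omega)
        have := hjy.2
        have := hky.1
        linarith
      · have : Z.t (2 * k + 1) < Z.t (2 * j) :=
          lt_of_idx (by omega) (by rw [Finset.mem_range] at hj; omega)
        have := hjy.1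
        have := hky.2
        linarith
  · rw [BarcodeRep.fn, indicator_of_notMem hy]
    symm
    apply Finset.sum_eq_zero
    intro k hk
    rw [indicator_of_notMem]
    intro hky
    exact hy (Set.mem_iUnion.2 ⟨k, Set.mem_iUnion.2 ⟨hk, hky⟩⟩)

end BarcodeRep

section Conv

variable {φ p : ℝ → ℝ} {s : ℝ} {Z : BarcodeRep}

/-- The convolution of a kernel with a barcode, in closed form. -/
def gfun (φ : ℝ → ℝ) (Z : BarcodeRep) : ℝ → ℝ :=
  fun y => ∑ k ∈ Finset.range Z.n, (Phi φ (y - Z.t (2 * k)) - Phi φ (y - Z.t (2 * k + 1)))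

lemma integrable_term (hK : IsKernelWith φ p s) (x : ℝ) (a b : ℝ) :
    Integrable (fun y => φ (x - y) * (Icc a b).indicator (fun _ => (1:ℝ)) y) := by
  have h1 : Integrable (fun y => φ (x - y)) := hK.2.1.comp_sub_left x
  have h2 := h1.bdd_mul
    ((measurable_const.indicator measurableSet_Icc).aestronglyMeasurable
      (f := (Icc a b).indicator (fun _ => (1:ℝ))))
    (c := 1) (Filter.Eventually.of_forall fun y => by
      by_cases hy : y ∈ Icc a b
      · simp [indicator_of_mem hy]
      · simp [indicator_of_notMem hy])
  exact h2.congr (Filter.Eventually.of_forall (fun y => mul_comm _ _))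

lemma conv_term (hK : IsKernelWith φ p s) (x : ℝ) {a b : ℝ} (hab : a ≤ b) :
    (∫ y, φ (x - y) * (Icc a b).indicator (fun _ => (1:ℝ)) y)
      = Phi φ (x - a) - Phi φ (x - b) := by
  have e1 : (fun y => φ (x - y) * (Icc a b).indicator (fun _ => (1:ℝ)) y)
      = (Icc a b).indicator (fun y => φ (x - y)) := by
    funext y
    by_cases hy : y ∈ Icc a b
    · simp [indicator_of_mem hy]
    · simp [indicator_of_notMem hy]
  rw [e1, integral_indicator measurableSet_Icc, integral_Icc_eq_integral_Ioc,
    ← intervalIntegral.integral_of_le hab, intervalIntegral.integral_comp_sub_left φ x]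
  have h3 := intervalIntegral.integral_interval_sub_left (hK.intInt 0 (x - a)) (hK.intInt 0 (x - b))
  simp only [Phi]
  linarith

lemma conv_eq_gfun (hK : IsKernelWith φ p s) : conv φ Z.fn = gfun φ Z := by
  funext x
  rw [conv, gfun]
  have e1 : ∀ y:ℝ, φ (x - y) * Z.fn y = ∑ k ∈ Finset.range Z.n,
      φ (x - y) * (Icc (Z.t (2 * k)) (Z.t (2 * k + 1))).indicator (fun _ => (1:ℝ)) y := by
    intro y
    rw [BarcodeRep.fn_eq_sum y, Finset.mul_sum]
  rw [integral_congr_ae (Filter.Eventually.of_forall e1)]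
  rw [MeasureTheory.integral_finset_sum _ (fun k _ => integrable_term hK x _ _)]
  apply Finset.sum_congr rfl
  intro k hk
  exact conv_term hK x (BarcodeRep.lt_of_idx (by omega)
    (by rw [Finset.mem_range] at hk; omega)).le

lemma gfun_cont (hK : IsKernelWith φ p s) : Continuous (gfun φ Z) := by
  have hPhi : Continuous (Phi φ) :=
    continuous_const.add (intervalIntegral.continuous_primitive (fun a b => hK.intInt a b) 0)
  apply continuous_finset_sum
  intro k _
  exact (hPhi.comp (continuous_id.sub continuous_const)).sub
    (hPhi.comp (continuous_id.sub continuous_const))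

lemma gfun_bound (hK : IsKernelWith φ p s) (y : ℝ) : |gfun φ Z y| ≤ Z.n := by
  calc |gfun φ Z y| ≤ ∑ k ∈ Finset.range Z.n,
      |Phi φ (y - Z.t (2 * k)) - Phi φ (y - Z.t (2 * k + 1))| :=
        Finset.abs_sum_le_sum_abs _ _
    _ ≤ ∑ _k ∈ Finset.range Z.n, (1:ℝ) := by
        apply Finset.sum_le_sum
        intro k _
        rw [abs_le]
        constructor
        · have := hK.phi_nonneg' (y - Z.t (2 * k))
          have := hK.phi_le_one (y - Z.t (2 * k + 1))
          linarith
        · have := hK.phi_le_one (y - Z.t (2 * k))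
          have := hK.phi_nonneg' (y - Z.t (2 * k + 1))
          linarith
    _ = Z.n := by simp

lemma term_nonneg (hK : IsKernelWith φ p s) {k : ℕ} (hk : k < Z.n) (y : ℝ) :
    0 ≤ Phi φ (y - Z.t (2 * k)) - Phi φ (y - Z.t (2 * k + 1)) := by
  have := hK.phi_mono (show y - Z.t (2 * k + 1) ≤ y - Z.t (2 * k) by
    have := (BarcodeRep.lt_of_idx (Z := Z) (i := 2 * k) (j := 2 * k + 1) (by omega) (by omega)).le
    linarith)
  linarith

lemma term_le_gfun (hK : IsKernelWith φ p s) {k : ℕ} (hk : k < Z.n) (y : ℝ) :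
    Phi φ (y - Z.t (2 * k)) - Phi φ (y - Z.t (2 * k + 1)) ≤ gfun φ Z y :=
  Finset.single_le_sum (fun j hj => term_nonneg hK (Finset.mem_range.1 hj) y)
    (Finset.mem_range.2 hk)

lemma term_zero_left (hK : IsKernelWith φ p s) {k : ℕ} (hk : k < Z.n) {y : ℝ}
    (h : y ≤ Z.t (2 * k) - s) :
    Phi φ (y - Z.t (2 * k)) - Phi φ (y - Z.t (2 * k + 1)) = 0 := by
  have hab := (BarcodeRep.lt_of_idx (Z := Z) (i := 2 * k) (j := 2 * k + 1) (by omega) (by omega)).le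
  rw [hK.phi_zero (by linarith), hK.phi_zero (by linarith)]
  ring

lemma term_zero_right (hK : IsKernelWith φ p s) {k : ℕ} (hk : k < Z.n) {y : ℝ}
    (h : Z.t (2 * k + 1) + s ≤ y) :
    Phi φ (y - Z.t (2 * k)) - Phi φ (y - Z.t (2 * k + 1)) = 0 := by
  have hab := (BarcodeRep.lt_of_idx (Z := Z) (i := 2 * k) (j := 2 * k + 1) (by omega) (by omega)).le
  rw [hK.phi_one (by linarith), hK.phi_one (by linarith)]
  ring

lemma gfun_collapse (hK : IsKernelWith φ p s) {k0 : ℕ} (hk0 : k0 < Z.n) {y : ℝ}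
    (h : ∀ k < Z.n, k ≠ k0 → Phi φ (y - Z.t (2 * k)) - Phi φ (y - Z.t (2 * k + 1)) = 0) :
    gfun φ Z y = Phi φ (y - Z.t (2 * k0)) - Phi φ (y - Z.t (2 * k0 + 1)) := by
  rw [gfun]
  exact Finset.sum_eq_single_of_mem k0 (Finset.mem_range.2 hk0)
    (fun k hk hne => h k (Finset.mem_range.1 hk) hne)

lemma gfun_collapse2 (hK : IsKernelWith φ p s) {j : ℕ} (hj : j + 1 < Z.n) {y : ℝ}
    (h : ∀ k < Z.n, k ≠ j → k ≠ j + 1 →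
      Phi φ (y - Z.t (2 * k)) - Phi φ (y - Z.t (2 * k + 1)) = 0) :
    gfun φ Z y = (Phi φ (y - Z.t (2 * j)) - Phi φ (y - Z.t (2 * j + 1)))
      + (Phi φ (y - Z.t (2 * (j+1))) - Phi φ (y - Z.t (2 * (j+1) + 1))) := by
  rw [gfun]
  rw [← Finset.sum_subset (s₁ := {j, j+1}) (by
    intro k hk
    simp only [Finset.mem_insert, Finset.mem_singleton] at hk
    rcases hk with rfl | rfl <;> simp [Finset.mem_range] <;> omega)
    (by
      intro k hk hk2
      simp only [Finset.mem_insert, Finset.mem_singleton, not_or] at hk2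
      exact h k (Finset.mem_range.1 hk) hk2.1 hk2.2)]
  rw [Finset.sum_insert (by simp), Finset.sum_singleton]

end Conv

section IntegralSign

variable {φ p : ℝ → ℝ} {ρ : ℝ} (hK : IsKernelWith φ p ρ)
include hK

lemma IsKernelWith.integrable_mul_bdd {G : ℝ → ℝ} (hc : Continuous G) {C : ℝ}
    (hb : ∀ u, |G u| ≤ C) : Integrable fun u => φ u * G u := by
  have h := hK.2.1.bdd_mul hc.aestronglyMeasurable
    (c := C) (Filter.Eventually.of_forall fun u => by simpa [Real.norm_eq_abs] using hb u)
  exact h.congr (Filter.Eventually.of_forall (fun u => mul_comm _ _))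

lemma IsKernelWith.int_nonneg {G : ℝ → ℝ} (hG : ∀ u, |u| ≤ ρ → 0 ≤ G u) :
    0 ≤ ∫ u, φ u * G u := by
  apply integral_nonneg
  intro u
  show (0:ℝ) ≤ φ u * G u
  by_cases hu : |u| ≤ ρ
  · exact mul_nonneg (hK.nonneg u) (hG u hu)
  · rw [hK.zero_of u (not_le.1 hu), zero_mul]

lemma IsKernelWith.int_pos {G : ℝ → ℝ} (hc : Continuous G) {C : ℝ}
    (hb : ∀ u, |G u| ≤ C) (hG : ∀ u, |u| ≤ ρ → 0 ≤ G u)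
    {m : ℝ} (h0m : 0 < m) (hmρ : m ≤ ρ)
    (hGs : ∀ u, 0 ≤ u → u ≤ m → 0 < G u) :
    0 < ∫ u, φ u * G u := by
  obtain ⟨u₀, hu₀, hmin⟩ := isCompact_Icc.exists_isMinOn (s := Icc (0:ℝ) m)
    (Set.nonempty_Icc.2 h0m.le) hc.continuousOn
  set c := G u₀ with hc0
  have hcpos : 0 < c := hGs u₀ hu₀.1 hu₀.2
  set ψ := (Ioc (0:ℝ) m).indicator (fun u => c * φ u) with hψ
  have hψint : Integrable ψ := ((hK.2.1.const_mul c).indicator measurableSet_Ioc)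
  have hmono : ∀ u, ψ u ≤ φ u * G u := by
    intro u
    by_cases hu : u ∈ Ioc (0:ℝ) m
    · rw [hψ, indicator_of_mem hu]
      have h1 : c ≤ G u := hmin ⟨hu.1.le, hu.2⟩
      have h2 : 0 ≤ φ u := hK.nonneg u
      calc c * φ u ≤ G u * φ u := mul_le_mul_of_nonneg_right h1 h2
        _ = φ u * G u := mul_comm _ _
    · rw [hψ, indicator_of_notMem hu]
      by_cases hu2 : |u| ≤ ρ
      · exact mul_nonneg (hK.nonneg u) (hG u hu2)
      · rw [hK.zero_of u (not_le.1 hu2), zero_mul]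
  have hψpos : 0 < ∫ u, ψ u := by
    rw [hψ, integral_indicator measurableSet_Ioc, MeasureTheory.integral_const_mul,
      ← intervalIntegral.integral_of_le h0m.le]
    have := hK.half_lt h0m
    simp only [Phi] at this
    have : 0 < ∫ u in (0:ℝ)..m, φ u := by linarith
    positivity
  calc 0 < ∫ u, ψ u := hψpos
    _ ≤ ∫ u, φ u * G u := integral_mono hψint (hK.integrable_mul_bdd hc hb) hmono

end IntegralSign

section Master

variable {φ p : ℝ → ℝ} {ρ : ℝ} (hK : IsKernelWith φ p ρ) {g : ℝ → ℝ}
  (hgc : Continuous g) {C : ℝ} (hgb : ∀ y, |g y| ≤ C)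
include hK hgc hgb

/-- The master identity: `∫ φ(u) (g(x−u) + g(x+u) − 1) du = 2 (φ*g)(x) − 1`. -/
lemma IsKernelWith.master (x : ℝ) :
    (∫ u, φ u * (g (x - u) + g (x + u) - 1)) = 2 * conv φ g x - 1 := by
  have hI1 : Integrable (fun u => φ u * g (x - u)) :=
    hK.integrable_mul_bdd (hgc.comp (continuous_const.sub continuous_id))
      (C := C) (fun u => hgb _)
  have hI2 : Integrable (fun u => φ u * g (x + u)) :=
    hK.integrable_mul_bdd (hgc.comp (continuous_const.add continuous_id))
      (C := C) (fun u => hgb _)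
  have e1 : conv φ g x = ∫ u, φ u * g (x - u) := by
    rw [conv]
    rw [← MeasureTheory.integral_sub_left_eq_self (fun y => φ (x - y) * g y) volume x]
    congr 1
    funext u
    rw [sub_sub_cancel]
  have e2 : (∫ u, φ u * g (x - u)) = ∫ u, φ u * g (x + u) := by
    rw [← MeasureTheory.integral_neg_eq_self (fun u => φ u * g (x + u)) volume]
    congr 1
    funext u
    rw [hK.even u, show x + -u = x - u by ring]
  have e3 : (fun u => φ u * (g (x - u) + g (x + u) - 1))
      = fun u => (φ u * g (x - u) + φ u * g (x + u)) - φ u := by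
    funext u; ring
  have hI12 : Integrable (fun u => φ u * g (x - u) + φ u * g (x + u)) := hI1.add hI2
  rw [e3, integral_sub hI12 hK.2.1, integral_add hI1 hI2, hK.total, e1, ← e2]
  ring

end Master

section Values

variable {φσ pσ φρ pρ : ℝ → ℝ} {σ ρ ω : ℝ}
  (hφσ : IsKernelWith φσ pσ σ) (hφρ : IsKernelWith φρ pρ ρ)
  (hσω : σ ≤ ω / 2) (hρω : ρ ≤ ω / 2) (hω : 0 < ω)
  {Z : BarcodeRep} (hZ : Z.MinWidth ω)

include hφσ hφρ

lemma gG_cont (x : ℝ) :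
    Continuous fun u => gfun φσ Z (x - u) + gfun φσ Z (x + u) - 1 :=
  (((gfun_cont hφσ).comp (continuous_const.sub continuous_id)).add
    ((gfun_cont hφσ).comp (continuous_const.add continuous_id))).sub continuous_const

lemma gG_bound (x : ℝ) (u : ℝ) :
    |gfun φσ Z (x - u) + gfun φσ Z (x + u) - 1| ≤ 2*(Z.n:ℝ)+1 := by
  have b1 := abs_le.1 (gfun_bound hφσ (Z := Z) (x - u))
  have b2 := abs_le.1 (gfun_bound hφσ (Z := Z) (x + u))
  rw [abs_le]
  constructor <;> linarith [b1.1, b1.2, b2.1, b2.2]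

lemma conclude_eq {x : ℝ}
    (hz : ∀ u : ℝ, |u| ≤ ρ → gfun φσ Z (x - u) + gfun φσ Z (x + u) = 1) :
    conv φρ (gfun φσ Z) x = 1/2 := by
  have hmain := hφρ.master (g := gfun φσ Z) (gfun_cont hφσ) (gfun_bound hφσ) x
  have hzero : (fun u => φρ u * (gfun φσ Z (x - u) + gfun φσ Z (x + u) - 1))
      = fun _ => (0:ℝ) := by
    funext u
    by_cases hu : |u| ≤ ρ
    · rw [hz u hu]; ring
    · rw [hφρ.zero_of u (not_le.1 hu)]; ring
  rw [hzero] at hmain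
  simp at hmain
  linarith

lemma conclude_gt {x m : ℝ} (hm0 : 0 < m) (hmρ : m ≤ ρ)
    (hnn : ∀ u : ℝ, |u| ≤ ρ → 0 ≤ gfun φσ Z (x - u) + gfun φσ Z (x + u) - 1)
    (hs : ∀ u : ℝ, 0 ≤ u → u ≤ m → 0 < gfun φσ Z (x - u) + gfun φσ Z (x + u) - 1) :
    1/2 < conv φρ (gfun φσ Z) x := by
  have hpos : 0 < ∫ u, φρ u * (gfun φσ Z (x - u) + gfun φσ Z (x + u) - 1) :=
    hφρ.int_pos (gG_cont hφσ hφρ x) (gG_bound hφσ hφρ x) hnn hm0 hmρ hs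
  have hmain := hφρ.master (g := gfun φσ Z) (gfun_cont hφσ) (gfun_bound hφσ) x
  linarith

lemma conclude_lt {x m : ℝ} (hm0 : 0 < m) (hmρ : m ≤ ρ)
    (hnp : ∀ u : ℝ, |u| ≤ ρ → gfun φσ Z (x - u) + gfun φσ Z (x + u) - 1 ≤ 0)
    (hs : ∀ u : ℝ, 0 ≤ u → u ≤ m → gfun φσ Z (x - u) + gfun φσ Z (x + u) - 1 < 0) :
    conv φρ (gfun φσ Z) x < 1/2 := by
  have hGc : Continuous fun u => 1 - gfun φσ Z (x - u) - gfun φσ Z (x + u) := by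
    have h := gG_cont (Z := Z) hφσ hφρ x
    have : (fun u => 1 - gfun φσ Z (x - u) - gfun φσ Z (x + u))
        = fun u => -(gfun φσ Z (x - u) + gfun φσ Z (x + u) - 1) := by funext u; ring
    rw [this]
    exact h.neg
  have hGb : ∀ u : ℝ, |1 - gfun φσ Z (x - u) - gfun φσ Z (x + u)| ≤ 2*(Z.n:ℝ)+1 := by
    intro u
    have := gG_bound (Z := Z) hφσ hφρ x u
    rw [abs_le] at *
    constructor <;> linarith [this.1, this.2]
  have hpos : 0 < ∫ u, φρ u * (1 - gfun φσ Z (x - u) - gfun φσ Z (x + u)) :=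
    hφρ.int_pos hGc hGb
      (fun u hu => by linarith [hnp u hu]) hm0 hmρ
      (fun u h1 h2 => by linarith [hs u h1 h2])
  have hneg : (∫ u, φρ u * (1 - gfun φσ Z (x - u) - gfun φσ Z (x + u)))
      = - ∫ u, φρ u * (gfun φσ Z (x - u) + gfun φσ Z (x + u) - 1) := by
    rw [← integral_neg]
    congr 1
    funext u
    ring
  have hmain := hφρ.master (g := gfun φσ Z) (gfun_cont hφσ) (gfun_bound hφσ) x
  linarith

include hσω hρω hω hZ

lemma collapse_near {k0 : ℕ} (hk0 : k0 < Z.n) {x : ℝ}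
    (hlb : Z.t (2*k0) ≤ x) (hub : x ≤ Z.t (2*k0+1)) {y : ℝ}
    (h1 : x - ρ ≤ y) (h2 : y ≤ x + ρ) :
    gfun φσ Z y = Phi φσ (y - Z.t (2*k0)) - Phi φσ (y - Z.t (2*k0+1)) := by
  apply gfun_collapse hφσ hk0
  intro k hk hne
  rcases lt_or_gt_of_ne hne with h | h
  · apply term_zero_right hφσ hk
    have := BarcodeRep.sep hZ hω (i := 2*k+1) (j := 2*k0) (by omega) (by omega)
    linarith
  · apply term_zero_left hφσ hk
    have := BarcodeRep.sep hZ hω (i := 2*k0+1) (j := 2*k) (by omega) (by omega)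
    linarith

lemma V_interface {j : ℕ} (hj : j < 2 * Z.n) :
    conv φρ (gfun φσ Z) (Z.t j) = 1/2 := by
  apply conclude_eq hφσ hφρ
  intro u hu
  have hu1 : -ρ ≤ u := neg_le_of_abs_le hu
  have hu2 : u ≤ ρ := le_of_abs_le hu
  have hρ0 : 0 < ρ := hφρ.1
  rcases Nat.even_or_odd j with ⟨k0, hk0e⟩ | ⟨k0, hk0e⟩
  · have hje : j = 2 * k0 := by omega
    subst hje
    have hk0 : k0 < Z.n := by omega
    have hab := BarcodeRep.cons hZ (i := 2*k0) (by omega)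
    have e1 := collapse_near hφσ hφρ hσω hρω hω hZ hk0 (le_refl (Z.t (2*k0)))
      (by linarith) (y := Z.t (2*k0) - u) (by linarith) (by linarith)
    have e2 := collapse_near hφσ hφρ hσω hρω hω hZ hk0 (le_refl (Z.t (2*k0)))
      (by linarith) (y := Z.t (2*k0) + u) (by linarith) (by linarith)
    rw [e1, e2]
    have ea1 : Z.t (2*k0) - u - Z.t (2*k0) = -u := by ring
    have ea2 : Z.t (2*k0) + u - Z.t (2*k0) = u := by ring
    rw [ea1, ea2]
    rw [hφσ.phi_zero (r := Z.t (2*k0) - u - Z.t (2*k0+1)) (by linarith),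
      hφσ.phi_zero (r := Z.t (2*k0) + u - Z.t (2*k0+1)) (by linarith)]
    have := hφσ.pair_one (r := u)
    linarith
  · have hje : j = 2 * k0 + 1 := by omega
    subst hje
    have hk0 : k0 < Z.n := by omega
    have hab := BarcodeRep.cons hZ (i := 2*k0) (by omega)
    have e1 := collapse_near hφσ hφρ hσω hρω hω hZ hk0 (by linarith)
      (le_refl (Z.t (2*k0+1))) (y := Z.t (2*k0+1) - u) (by linarith) (by linarith)
    have e2 := collapse_near hφσ hφρ hσω hρω hω hZ hk0 (by linarith)
      (le_refl (Z.t (2*k0+1))) (y := Z.t (2*k0+1) + u) (by linarith) (by linarith)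
    rw [e1, e2]
    have ea1 : Z.t (2*k0+1) - u - Z.t (2*k0+1) = -u := by ring
    have ea2 : Z.t (2*k0+1) + u - Z.t (2*k0+1) = u := by ring
    rw [ea1, ea2]
    rw [hφσ.phi_one (r := Z.t (2*k0+1) - u - Z.t (2*k0)) (by linarith),
      hφσ.phi_one (r := Z.t (2*k0+1) + u - Z.t (2*k0)) (by linarith)]
    have := hφσ.pair_one (r := u)
    linarith

lemma V_inside {k0 : ℕ} (hk0 : k0 < Z.n) {x : ℝ}
    (hxa : Z.t (2*k0) < x) (hxb : x < Z.t (2*k0+1)) :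
    1/2 < conv φρ (gfun φσ Z) x := by
  have hρ0 : 0 < ρ := hφρ.1
  have hσ0 : 0 < σ := hφσ.1
  have hAB : ω ≤ (x - Z.t (2*k0)) + (Z.t (2*k0+1) - x) := by
    have := hZ.1 k0 hk0; linarith
  have key : ∀ u : ℝ, Phi φσ ((x - Z.t (2*k0)) + u) + Phi φσ ((x - Z.t (2*k0)) - u)
      + Phi φσ ((Z.t (2*k0+1) - x) - u) + Phi φσ ((Z.t (2*k0+1) - x) + u) - 3
      ≤ gfun φσ Z (x - u) + gfun φσ Z (x + u) - 1 := by
    intro u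
    have t1 := term_le_gfun hφσ hk0 (x - u)
    have t2 := term_le_gfun hφσ hk0 (x + u)
    have e1 : x - u - Z.t (2*k0) = (x - Z.t (2*k0)) - u := by ring
    have e2 : x + u - Z.t (2*k0) = (x - Z.t (2*k0)) + u := by ring
    have e3 : x - u - Z.t (2*k0+1) = -((Z.t (2*k0+1) - x) + u) := by ring
    have e4 : x + u - Z.t (2*k0+1) = -((Z.t (2*k0+1) - x) - u) := by ring
    rw [e1, e3, hφσ.phi_neg] at t1
    rw [e2, e4, hφσ.phi_neg] at t2
    linarith
  apply conclude_gt hφσ hφρ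
    (m := min (min (x - Z.t (2*k0)) (Z.t (2*k0+1) - x)) ρ / 2)
    (div_pos (lt_min (lt_min (by linarith) (by linarith)) hρ0) two_pos) (by linarith [min_le_right (min (x - Z.t (2*k0)) (Z.t (2*k0+1) - x)) ρ])
  · intro u hu
    have hE := hφσ.E_ge (ω := ω) (A := x - Z.t (2*k0)) (B := Z.t (2*k0+1) - x) (u := u)
      (by linarith) (by linarith) hAB (by linarith) (le_trans hu hρω)
    linarith [key u]
  · intro u h0u hum
    have habs : |u| = u := abs_of_nonneg h0u
    have hmin1 := min_le_left (min (x - Z.t (2*k0)) (Z.t (2*k0+1) - x)) ρ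
    have hmina := min_le_left (x - Z.t (2*k0)) (Z.t (2*k0+1) - x)
    have hminb := min_le_right (x - Z.t (2*k0)) (Z.t (2*k0+1) - x)
    have hminpos : 0 < min (x - Z.t (2*k0)) (Z.t (2*k0+1) - x) :=
      lt_min (by linarith) (by linarith)
    have hmin2 := min_le_right (min (x - Z.t (2*k0)) (Z.t (2*k0+1) - x)) ρ
    have hmp : 0 < min (min (x - Z.t (2*k0)) (Z.t (2*k0+1) - x)) ρ := lt_min hminpos hρ0
    have hE := hφσ.E_gt (ω := ω) (A := x - Z.t (2*k0)) (B := Z.t (2*k0+1) - x) (u := u)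
      (by rw [habs]; linarith) (by rw [habs]; linarith) hAB (by linarith)
      (by rw [habs]; linarith)
    linarith [key u]

end Values

section Values2

variable {φσ pσ φρ pρ : ℝ → ℝ} {σ ρ ω : ℝ}
  (hφσ : IsKernelWith φσ pσ σ) (hφρ : IsKernelWith φρ pρ ρ)
  (hσω : σ ≤ ω / 2) (hρω : ρ ≤ ω / 2) (hω : 0 < ω)
  {Z : BarcodeRep} (hZ : Z.MinWidth ω)

include hφσ hφρ hσω hρω hω hZ

lemma V_left (hn : Z.n ≠ 0) {x : ℝ} (hx : x < Z.t 0) :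
    conv φρ (gfun φσ Z) x < 1/2 := by
  have hρ0 : 0 < ρ := hφρ.1
  have hσ0 : 0 < σ := hφσ.1
  have hcons := BarcodeRep.cons hZ (i := 0) (by omega)
  have hcol : ∀ y : ℝ, x - ρ ≤ y → y ≤ x + ρ →
      gfun φσ Z y = Phi φσ (y - Z.t 0) - Phi φσ (y - Z.t 1) := by
    intro y h1 h2
    have h := gfun_collapse (Z := Z) hφσ (k0 := 0) (by omega) (y := y) ?_
    · simpa using h
    · intro k hk hne
      apply term_zero_left hφσ hk
      have := BarcodeRep.sep2 hZ hω (i := 0) (j := 2*k) (by omega) (by omega)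
      linarith
  have hval : ∀ u : ℝ, |u| ≤ ρ → gfun φσ Z (x - u) + gfun φσ Z (x + u) - 1
      = 1 - Phi φσ ((Z.t 0 - x) - u) - Phi φσ ((Z.t 0 - x) + u) := by
    intro u hu
    have hu1 : -ρ ≤ u := neg_le_of_abs_le hu
    have hu2 : u ≤ ρ := le_of_abs_le hu
    rw [hcol (x - u) (by linarith) (by linarith), hcol (x + u) (by linarith) (by linarith)]
    rw [hφσ.phi_zero (r := x - u - Z.t 1) (by linarith),
      hφσ.phi_zero (r := x + u - Z.t 1) (by linarith)]
    have e1 : x - u - Z.t 0 = -((Z.t 0 - x) + u) := by ring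
    have e2 : x + u - Z.t 0 = -((Z.t 0 - x) - u) := by ring
    rw [e1, e2, hφσ.phi_neg, hφσ.phi_neg]
    ring
  apply conclude_lt hφσ hφρ (m := min (Z.t 0 - x) ρ / 2)
    (div_pos (lt_min (by linarith) hρ0) two_pos)
    (by linarith [min_le_right (Z.t 0 - x) ρ])
  · intro u hu
    rw [hval u hu]
    have := hφσ.pair ((Z.t 0 - x) - u) ((Z.t 0 - x) + u) (by linarith)
    linarith
  · intro u h0u hum
    have hmp : 0 < min (Z.t 0 - x) ρ := lt_min (by linarith) hρ0
    have hm1 := min_le_left (Z.t 0 - x) ρ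
    have hm2 := min_le_right (Z.t 0 - x) ρ
    rw [hval u (by rw [abs_of_nonneg h0u]; linarith)]
    have := hφσ.pair_strict (show (0:ℝ) < (Z.t 0 - x) - u by linarith)
      (show (0:ℝ) < (Z.t 0 - x) + u by linarith)
    linarith

lemma V_right (hn : Z.n ≠ 0) {x : ℝ} (hx : Z.t (2 * Z.n - 1) < x) :
    conv φρ (gfun φσ Z) x < 1/2 := by
  have hρ0 : 0 < ρ := hφρ.1
  have hσ0 : 0 < σ := hφσ.1
  obtain ⟨k0, hk0e⟩ : ∃ k0, Z.n = k0 + 1 := ⟨Z.n - 1, by omega⟩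
  have hlast : 2 * Z.n - 1 = 2 * k0 + 1 := by omega
  rw [hlast] at hx
  have hk0 : k0 < Z.n := by omega
  have hcons := BarcodeRep.cons hZ (i := 2*k0) (by omega)
  have hcol : ∀ y : ℝ, x - ρ ≤ y → y ≤ x + ρ →
      gfun φσ Z y = Phi φσ (y - Z.t (2*k0)) - Phi φσ (y - Z.t (2*k0+1)) := by
    intro y h1 h2
    apply gfun_collapse hφσ hk0
    intro k hk hne
    apply term_zero_right hφσ hk
    have := BarcodeRep.sep2 hZ hω (i := 2*k+1) (j := 2*k0+1) (by omega) (by omega)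
    linarith
  have hval : ∀ u : ℝ, |u| ≤ ρ → gfun φσ Z (x - u) + gfun φσ Z (x + u) - 1
      = 1 - Phi φσ ((x - Z.t (2*k0+1)) - u) - Phi φσ ((x - Z.t (2*k0+1)) + u) := by
    intro u hu
    have hu1 : -ρ ≤ u := neg_le_of_abs_le hu
    have hu2 : u ≤ ρ := le_of_abs_le hu
    rw [hcol (x - u) (by linarith) (by linarith), hcol (x + u) (by linarith) (by linarith)]
    rw [hφσ.phi_one (r := x - u - Z.t (2*k0)) (by linarith),
      hφσ.phi_one (r := x + u - Z.t (2*k0)) (by linarith)]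
    have e1 : x - u - Z.t (2*k0+1) = (x - Z.t (2*k0+1)) - u := by ring
    have e2 : x + u - Z.t (2*k0+1) = (x - Z.t (2*k0+1)) + u := by ring
    rw [e1, e2]
    ring
  apply conclude_lt hφσ hφρ (m := min (x - Z.t (2*k0+1)) ρ / 2)
    (div_pos (lt_min (by linarith) hρ0) two_pos)
    (by linarith [min_le_right (x - Z.t (2*k0+1)) ρ])
  · intro u hu
    rw [hval u hu]
    have := hφσ.pair ((x - Z.t (2*k0+1)) - u) ((x - Z.t (2*k0+1)) + u) (by linarith)
    linarith
  · intro u h0u hum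
    have hmp : 0 < min (x - Z.t (2*k0+1)) ρ := lt_min (by linarith) hρ0
    have hm1 := min_le_left (x - Z.t (2*k0+1)) ρ
    have hm2 := min_le_right (x - Z.t (2*k0+1)) ρ
    rw [hval u (by rw [abs_of_nonneg h0u]; linarith)]
    have := hφσ.pair_strict (show (0:ℝ) < (x - Z.t (2*k0+1)) - u by linarith)
      (show (0:ℝ) < (x - Z.t (2*k0+1)) + u by linarith)
    linarith

lemma V_gap {j : ℕ} (hj : j + 1 < Z.n) {x : ℝ}
    (hxa : Z.t (2*j+1) < x) (hxb : x < Z.t (2*j+2)) :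
    conv φρ (gfun φσ Z) x < 1/2 := by
  have hρ0 : 0 < ρ := hφρ.1
  have hσ0 : 0 < σ := hφσ.1
  have hconsa := BarcodeRep.cons hZ (i := 2*j) (by omega)
  have hconsb := BarcodeRep.cons hZ (i := 2*j+2) (by omega)
  have hgap := BarcodeRep.cons hZ (i := 2*j+1) (by omega)
  have hcol : ∀ y : ℝ, x - ρ ≤ y → y ≤ x + ρ →
      gfun φσ Z y = (1 - Phi φσ (y - Z.t (2*j+1))) + Phi φσ (y - Z.t (2*j+2)) := by
    intro y h1 h2
    have h := gfun_collapse2 hφσ hj (y := y) ?_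
    · rw [h]
      have e1 : 2*(j+1) = 2*j+2 := by ring
      rw [e1]
      have e2 : 2*j+2+1 = 2*j+3 := by omega
      rw [e2]
      rw [hφσ.phi_one (r := y - Z.t (2*j)) (by linarith),
        hφσ.phi_zero (r := y - Z.t (2*j+3)) (by linarith)]
      ring
    · intro k hk hne1 hne2
      rcases Nat.lt_or_ge k j with h | h
      · apply term_zero_right hφσ hk
        have := BarcodeRep.sep2 hZ hω (i := 2*k+1) (j := 2*j+1) (by omega) (by omega)
        linarith
      · have hk2 : j + 1 < k := by omega
        apply term_zero_left hφσ hk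
        have := BarcodeRep.sep2 hZ hω (i := 2*j+2) (j := 2*k) (by omega) (by omega)
        linarith
  have hAB : ω ≤ (x - Z.t (2*j+1)) + (Z.t (2*j+2) - x) := by linarith
  have hval : ∀ u : ℝ, |u| ≤ ρ → gfun φσ Z (x - u) + gfun φσ Z (x + u) - 1
      = 3 - (Phi φσ ((x - Z.t (2*j+1)) + u) + Phi φσ ((x - Z.t (2*j+1)) - u)
        + Phi φσ ((Z.t (2*j+2) - x) - u) + Phi φσ ((Z.t (2*j+2) - x) + u)) := by
    intro u hu
    have hu1 : -ρ ≤ u := neg_le_of_abs_le hu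
    have hu2 : u ≤ ρ := le_of_abs_le hu
    rw [hcol (x - u) (by linarith) (by linarith), hcol (x + u) (by linarith) (by linarith)]
    have e1 : x - u - Z.t (2*j+1) = (x - Z.t (2*j+1)) - u := by ring
    have e2 : x + u - Z.t (2*j+1) = (x - Z.t (2*j+1)) + u := by ring
    have e3 : x - u - Z.t (2*j+2) = -((Z.t (2*j+2) - x) + u) := by ring
    have e4 : x + u - Z.t (2*j+2) = -((Z.t (2*j+2) - x) - u) := by ring
    rw [e1, e2, e3, e4, hφσ.phi_neg, hφσ.phi_neg]
    ring
  apply conclude_lt hφσ hφρ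
    (m := min (min (x - Z.t (2*j+1)) (Z.t (2*j+2) - x)) ρ / 2)
    (div_pos (lt_min (lt_min (by linarith) (by linarith)) hρ0) two_pos)
    (by linarith [min_le_right (min (x - Z.t (2*j+1)) (Z.t (2*j+2) - x)) ρ])
  · intro u hu
    rw [hval u hu]
    have hE := hφσ.E_ge (ω := ω) (A := x - Z.t (2*j+1)) (B := Z.t (2*j+2) - x) (u := u)
      (by linarith) (by linarith) hAB (by linarith) (le_trans hu hρω)
    linarith
  · intro u h0u hum
    have habs : |u| = u := abs_of_nonneg h0u
    have hmin1 := min_le_left (min (x - Z.t (2*j+1)) (Z.t (2*j+2) - x)) ρ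
    have hmin2 := min_le_right (min (x - Z.t (2*j+1)) (Z.t (2*j+2) - x)) ρ
    have hmina := min_le_left (x - Z.t (2*j+1)) (Z.t (2*j+2) - x)
    have hminb := min_le_right (x - Z.t (2*j+1)) (Z.t (2*j+2) - x)
    have hminpos : 0 < min (x - Z.t (2*j+1)) (Z.t (2*j+2) - x) :=
      lt_min (by linarith) (by linarith)
    have hmp : 0 < min (min (x - Z.t (2*j+1)) (Z.t (2*j+2) - x)) ρ := lt_min hminpos hρ0
    rw [hval u (by rw [habs]; linarith)]
    have hE := hφσ.E_gt (ω := ω) (A := x - Z.t (2*j+1)) (B := Z.t (2*j+2) - x) (u := u)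
      (by rw [habs]; linarith) (by rw [habs]; linarith) hAB (by linarith)
      (by rw [habs]; linarith)
    linarith

end Values2

lemma BarcodeRep.mem_supp {Z : BarcodeRep} {x : ℝ} :
    x ∈ Z.supp ↔ ∃ k < Z.n, Z.t (2*k) ≤ x ∧ x ≤ Z.t (2*k+1) := by
  simp only [BarcodeRep.supp, Set.mem_iUnion, Finset.mem_range, Set.mem_Icc, exists_prop]

lemma pos_cases (Z : BarcodeRep) (hn : Z.n ≠ 0) (x : ℝ) :
    (∃ k < Z.n, Z.t (2*k) ≤ x ∧ x ≤ Z.t (2*k+1)) ∨ x < Z.t 0 ∨ Z.t (2*Z.n - 1) < x ∨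
      (∃ j, j + 1 < Z.n ∧ Z.t (2*j+1) < x ∧ x < Z.t (2*j+2)) := by
  classical
  by_cases h0 : x < Z.t 0
  · exact Or.inr (Or.inl h0)
  by_cases hlast : Z.t (2*Z.n - 1) < x
  · exact Or.inr (Or.inr (Or.inl hlast))
  push_neg at h0 hlast
  set S := (Finset.range Z.n).filter (fun k => Z.t (2*k) ≤ x) with hS
  have hSne : S.Nonempty := by
    refine ⟨0, ?_⟩
    rw [hS, Finset.mem_filter, Finset.mem_range]
    constructor
    · omega
    · simpa using h0
  have hkmem := S.max'_mem hSne
  set k := S.max' hSne with hk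
  rw [Finset.mem_filter, Finset.mem_range] at hkmem
  obtain ⟨hkn, hkx⟩ := hkmem
  by_cases hxk : x ≤ Z.t (2*k+1)
  · exact Or.inl ⟨k, hkn, hkx, hxk⟩
  push_neg at hxk
  have hk1 : k + 1 < Z.n := by
    by_contra hc
    have he : 2*k+1 = 2*Z.n - 1 := by omega
    rw [he] at hxk
    linarith
  have hxk2 : x < Z.t (2*k+2) := by
    by_contra hc
    push_neg at hc
    have hmem : k + 1 ∈ S := by
      rw [hS, Finset.mem_filter, Finset.mem_range]
      refine ⟨hk1, ?_⟩
      have e : 2*(k+1) = 2*k+2 := by ring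
      rw [e]
      exact hc
    have := S.le_max' (k+1) hmem
    omega
  exact Or.inr (Or.inr (Or.inr ⟨k, hk1, hxk, hxk2⟩))

/-- Lemma 9: for `z ∈ ℬ_ω` nonzero, `ρ, σ ∈ (0, ω/2]`,
kernels `φ_ρ, φ_σ ∈ 𝒦` with `φ_σ` continuous, the level set
`{φ_ρ * f_σ = 1/2}` is exactly the set of interface locations of `z`, and the
upper level set `{φ_ρ * f_σ ≥ 1/2}` equals `supp z`. -/
theorem statement13 (φσ pσ φρ pρ : ℝ → ℝ) (σ ρ ω : ℝ)
    (hφσ : IsKernelWith φσ pσ σ) (hφρ : IsKernelWith φρ pρ ρ)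
    (hσω : σ ≤ ω / 2) (hρω : ρ ≤ ω / 2) (hω : 0 < ω)
    (hcont : Continuous φσ)
    (Z : BarcodeRep) (hZ : Z.MinWidth ω) (hZ0 : Z.n ≠ 0) :
    {x : ℝ | conv φρ (conv φσ Z.fn) x = 1/2} = {x : ℝ | Z.IsInterface x} ∧
    {x : ℝ | 1/2 ≤ conv φρ (conv φσ Z.fn) x} = Z.supp := by
  have hg : conv φσ Z.fn = gfun φσ Z := conv_eq_gfun hφσ
  constructor
  · ext x
    simp only [Set.mem_setOf_eq]
    constructor
    · intro hx
      rw [hg] at hx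
      rcases pos_cases Z hZ0 x with ⟨k, hk, hka, hkb⟩ | h0 | hlast | ⟨j, hj, hja, hjb⟩
      · rcases eq_or_lt_of_le hka with he | hlt
        · exact ⟨2*k, by omega, he⟩
        · rcases eq_or_lt_of_le hkb with he | hlt2
          · exact ⟨2*k+1, by omega, he.symm⟩
          · exfalso
            have := V_inside hφσ hφρ hσω hρω hω hZ hk hlt hlt2
            linarith
      · exfalso
        have := V_left hφσ hφρ hσω hρω hω hZ hZ0 h0
        linarith
      · exfalso
        have := V_right hφσ hφρ hσω hρω hω hZ hZ0 hlast
        linarith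
      · exfalso
        have := V_gap hφσ hφρ hσω hρω hω hZ hj hja hjb
        linarith
    · rintro ⟨j, hj, rfl⟩
      rw [hg]
      exact V_interface hφσ hφρ hσω hρω hω hZ hj
  · ext x
    simp only [Set.mem_setOf_eq]
    constructor
    · intro hx
      rw [hg] at hx
      rcases pos_cases Z hZ0 x with ⟨k, hk, hka, hkb⟩ | h0 | hlast | ⟨j, hj, hja, hjb⟩
      · exact BarcodeRep.mem_supp.2 ⟨k, hk, hka, hkb⟩
      · exfalso
        have := V_left hφσ hφρ hσω hρω hω hZ hZ0 h0
        linarith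
      · exfalso
        have := V_right hφσ hφρ hσω hρω hω hZ hZ0 hlast
        linarith
      · exfalso
        have := V_gap hφσ hφρ hσω hρω hω hZ hj hja hjb
        linarith
    · intro hx
      obtain ⟨k, hk, hka, hkb⟩ := BarcodeRep.mem_supp.1 hx
      rw [hg]
      rcases eq_or_lt_of_le hka with he | hlt
      · have := V_interface hφσ hφρ hσω hρω hω hZ (j := 2*k) (by omega)
        rw [he] at this
        linarith
      · rcases eq_or_lt_of_le hkb with he | hlt2
        · have := V_interface hφσ hφρ hσω hρω hω hZ (j := 2*k+1) (by omega)
          rw [← he] at this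
          linarith
        · have := V_inside hφσ hφρ hσω hρω hω hZ hk hlt hlt2
          linarith

end
end
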